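/- arXiv:1403.4622 — 5 statements merged into one kernel-verified Lean document; each statement's English description precedes it below -/
import Mathlib

section
/- Let G be a group, B₁ and B₂ subgroups of G, and g, a₁, a₂, b₁, b₂, ã₂ ∈ G with b₁ ∈ B₁ and b₂ ∈ B₂. Assume: a₁ commutes with every element of B₁; x^{g·ã₂} = x^{g·a₂} for every x ∈ B₁; and ã₂ commutes with every element of B₂. Set ã₁ := (a₁ g a₂)(g ã₂)⁻¹. Then ã₁ (b₁ g b₂) ã₂ = a₁ b₁ g a₂ b₂. (Correctness of the reduction of the problem underlying the Double Coset key exchange protocol to the Search Simultaneous Conjugacy Problem.) -/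
/-- Correctness of the reduction of the Double Coset problem to the Search SCP:
with `b₁ ∈ B₁`, `b₂ ∈ B₂`, `a₁` commuting with every element of `B₁`,
`x^(g·a₂') = x^(g·a₂)` for all `x ∈ B₁`, and `a₂'` commuting with every element of `B₂`,
setting `a₁' := (a₁ g a₂)(g a₂')⁻¹`, we have `a₁' (b₁ g b₂) a₂' = a₁ b₁ g a₂ b₂`. -/
theorem double_coset_reduction {G : Type*} [Group G] (B₁ B₂ : Subgroup G)
    (g a₁ a₂ b₁ b₂ a₂' : G) (hb₁ : b₁ ∈ B₁) (hb₂ : b₂ ∈ B₂)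
    (h₁ : ∀ x ∈ B₁, a₁ * x = x * a₁)
    (h₂ : ∀ x ∈ B₁, (g * a₂')⁻¹ * x * (g * a₂') = (g * a₂)⁻¹ * x * (g * a₂))
    (h₃ : ∀ x ∈ B₂, a₂' * x = x * a₂') :
    ((a₁ * g * a₂) * (g * a₂')⁻¹) * (b₁ * g * b₂) * a₂' = a₁ * b₁ * g * a₂ * b₂ := by
  have key := h₂ b₁ hb₁
  have kc := h₃ b₂ hb₂
  calc ((a₁ * g * a₂) * (g * a₂')⁻¹) * (b₁ * g * b₂) * a₂'
      = (a₁ * g * a₂) * (g * a₂')⁻¹ * b₁ * g * (b₂ * a₂') := by group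
    _ = (a₁ * g * a₂) * (g * a₂')⁻¹ * b₁ * g * (a₂' * b₂) := by rw [kc]
    _ = (a₁ * g * a₂) * ((g * a₂')⁻¹ * b₁ * (g * a₂')) * b₂ := by group
    _ = (a₁ * g * a₂) * ((g * a₂)⁻¹ * b₁ * (g * a₂)) * b₂ := by rw [key]
    _ = a₁ * b₁ * g * a₂ * b₂ := by group
end

section
/- Let G be a group, B a subgroup of G, and a, b, ã, b̃ ∈ G. Assume: a^{b̃} = a^{b}; x^{ã} = x^{a} for every x ∈ B; and b̃ commutes with every element of the centralizer of B in G. Then ã⁻¹ b̃⁻¹ ã b̃ = a⁻¹ b⁻¹ a b, i.e., the commutator [ã, b̃] equals the commutator [a, b]. (Correctness of the reduction of the problem underlying the Commutator key exchange protocol to the Search Simultaneous Conjugacy Problem together with centralizer computations.) -/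
/-- Correctness of the reduction of the Commutator key exchange problem to the
Search SCP together with centralizer computations:
if `a^b' = a^b`, `x^a' = x^a` for every `x ∈ B`, and `b'` commutes with every element
of the centralizer of `B` in `G`, then `[a', b'] = [a, b]`. -/
theorem commutator_protocol_reduction {G : Type*} [Group G] (B : Subgroup G)
    (a b a' b' : G)
    (h₁ : b'⁻¹ * a * b' = b⁻¹ * a * b)
    (h₂ : ∀ x ∈ B, a'⁻¹ * x * a' = a⁻¹ * x * a)
    (h₃ : ∀ x ∈ Subgroup.centralizer (B : Set G), b' * x = x * b') :
    a'⁻¹ * b'⁻¹ * a' * b' = a⁻¹ * b⁻¹ * a * b := by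
  have hc : a' * a⁻¹ ∈ Subgroup.centralizer (B : Set G) := by
    intro x hx
    have h := h₂ x hx
    calc x * (a' * a⁻¹) = a' * (a'⁻¹ * x * a') * a⁻¹ := by group
      _ = a' * (a⁻¹ * x * a) * a⁻¹ := by rw [h]
      _ = (a' * a⁻¹) * x := by group
  have hcomm := h₃ _ hc
  have key : a'⁻¹ * b'⁻¹ * a' = a⁻¹ * b'⁻¹ * a := by
    have hinv : b'⁻¹ * (a' * a⁻¹) = (a' * a⁻¹) * b'⁻¹ := by
      have := congrArg (fun z => b'⁻¹ * z * b'⁻¹) hcomm.symm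
      simpa [mul_assoc] using this
    calc a'⁻¹ * b'⁻¹ * a' = a'⁻¹ * (b'⁻¹ * (a' * a⁻¹)) * a := by group
      _ = a'⁻¹ * ((a' * a⁻¹) * b'⁻¹) * a := by rw [hinv]
      _ = a⁻¹ * b'⁻¹ * a := by group
  calc a'⁻¹ * b'⁻¹ * a' * b' = (a'⁻¹ * b'⁻¹ * a') * b' := by group
    _ = a⁻¹ * b'⁻¹ * a * b' := by rw [key]
    _ = a⁻¹ * (b'⁻¹ * a * b') := by group
    _ = a⁻¹ * (b⁻¹ * a * b) := by rw [h₁]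
    _ = a⁻¹ * b⁻¹ * a * b := by group
end

section
/- Let G be a group, C and D subgroups of G, and g, a₁, a₂, b₁, b₂, ã₂ ∈ G. Assume: every element of C commutes with a₁; every element of D commutes with b₂; a₂ ∈ D; b₁ ∈ C; (c^g)^{ã₂} = (c^g)^{a₂} for every c ∈ C; and ã₂ commutes with every element of the centralizer of D in G. Set ã₁ := (a₁ g a₂)(g ã₂)⁻¹. Then ã₁ (b₁ g b₂) ã₂ = a₁ b₁ g a₂ b₂. (Correctness of the reduction of the problem underlying the Centralizer key exchange protocol to the Search Simultaneous Conjugacy Problem together with centralizer computations.) -/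
/-- Correctness of the reduction of the Centralizer key exchange problem to the
Search SCP together with centralizer computations. With `g^x := x⁻¹ g x`:
if every element of `C` commutes with `a₁`, every element of `D` commutes with `b₂`,
`a₂ ∈ D`, `b₁ ∈ C`, `(c^g)^a₂' = (c^g)^a₂` for every `c ∈ C`, and `a₂'` commutes with
every element of the centralizer of `D` in `G`, then setting
`a₁' := (a₁ g a₂)(g a₂')⁻¹`, we have `a₁' (b₁ g b₂) a₂' = a₁ b₁ g a₂ b₂`. -/
theorem centralizer_protocol_reduction {G : Type*} [Group G] (C D : Subgroup G)
    (g a₁ a₂ b₁ b₂ a₂' : G)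
    (hC : ∀ c ∈ C, c * a₁ = a₁ * c)
    (hD : ∀ d ∈ D, d * b₂ = b₂ * d)
    (ha₂ : a₂ ∈ D) (hb₁ : b₁ ∈ C)
    (hconj : ∀ c ∈ C, a₂'⁻¹ * (g⁻¹ * c * g) * a₂' = a₂⁻¹ * (g⁻¹ * c * g) * a₂)
    (hcent : ∀ x ∈ Subgroup.centralizer (D : Set G), a₂' * x = x * a₂') :
    ((a₁ * g * a₂) * (g * a₂')⁻¹) * (b₁ * g * b₂) * a₂' = a₁ * b₁ * g * a₂ * b₂ := by
  have hb₂ : a₂' * b₂ = b₂ * a₂' := by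
    apply hcent
    rw [Subgroup.mem_centralizer_iff]
    intro d hd
    exact hD d hd
  have h1 := hconj b₁ hb₁
  have h2 := hC b₁ hb₁
  have : ((a₁ * g * a₂) * (g * a₂')⁻¹) * (b₁ * g * b₂) * a₂'
      = a₁ * (g * a₂ * (a₂'⁻¹ * (g⁻¹ * b₁ * g) * a₂')) * (a₂'⁻¹ * b₂ * a₂') := by
    group
  rw [this, h1]
  have hb₂' : a₂'⁻¹ * b₂ * a₂' = b₂ := by
    rw [mul_assoc, ← hb₂]; group
  rw [hb₂']
  calc a₁ * (g * a₂ * (a₂⁻¹ * (g⁻¹ * b₁ * g) * a₂)) * b₂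
      = a₁ * b₁ * g * a₂ * b₂ := by rw [← h2]; group; rw [h2]
end

section
/- Let G be a Garside group. For all α, β ∈ G⁺: if Δ ≼ αβ, then Δ ≼ α(β ∧ Δ), where β ∧ Δ denotes the greatest common left divisor of β and Δ. -/
/-- A Garside structure on a group `G`: a submonoid `G⁺` of positive elements
together with a Garside element `Δ`, satisfying the Garside axioms. -/
structure GarsideStructure (G : Type*) [Group G] where
  /-- the monoid `G⁺` of positive elements -/
  pos : Submonoid G
  /-- the Garside element `Δ` -/
  Δ : G
  delta_mem : Δ ∈ pos
  /-- `G⁺` is Noetherian -/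
  noetherian : ∀ a ∈ pos, ∃ n : ℕ, ∀ l : List G,
    (∀ x ∈ l, x ∈ pos ∧ x ≠ 1) → l.prod = a → l.length ≤ n
  /-- any two elements of `G⁺` admit a least common right multiple (w.r.t. `≼`) -/
  lcm_right : ∀ a ∈ pos, ∀ b ∈ pos, ∃ m ∈ pos,
    a⁻¹ * m ∈ pos ∧ b⁻¹ * m ∈ pos ∧
      ∀ c ∈ pos, a⁻¹ * c ∈ pos → b⁻¹ * c ∈ pos → m⁻¹ * c ∈ pos
  /-- any two elements of `G⁺` admit a least common left multiple (w.r.t. `≽`) -/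
  lcm_left : ∀ a ∈ pos, ∀ b ∈ pos, ∃ m ∈ pos,
    m * a⁻¹ ∈ pos ∧ m * b⁻¹ ∈ pos ∧
      ∀ c ∈ pos, c * a⁻¹ ∈ pos → c * b⁻¹ ∈ pos → c * m⁻¹ ∈ pos
  /-- `G` is the group of fractions of `G⁺` -/
  fractions : ∀ g : G, ∃ a ∈ pos, ∃ b ∈ pos, g = a⁻¹ * b
  /-- `Δ` is balanced: its left divisors in `G⁺` coincide with its right divisors -/
  balanced : ∀ s ∈ pos, (s⁻¹ * Δ ∈ pos ↔ Δ * s⁻¹ ∈ pos)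
  /-- the set of simple elements (divisors of `Δ`) is finite -/
  simples_finite : {s : G | s ∈ pos ∧ s⁻¹ * Δ ∈ pos}.Finite
  /-- the simple elements generate `G⁺` -/
  simples_generate : Submonoid.closure {s : G | s ∈ pos ∧ s⁻¹ * Δ ∈ pos} = pos

namespace GarsideStructure

variable {G : Type*} [Group G]

/-- `a ≼ b` : left divisibility. -/
def LeftDvd (Γ : GarsideStructure G) (a b : G) : Prop := a⁻¹ * b ∈ Γ.pos

/-- `b ≽ a` : right divisibility. -/
def RightDvd (Γ : GarsideStructure G) (b a : G) : Prop := b * a⁻¹ ∈ Γ.pos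

/-- a simple element: a divisor of `Δ`. -/
def Simple (Γ : GarsideStructure G) (s : G) : Prop := s ∈ Γ.pos ∧ Γ.LeftDvd s Γ.Δ

/-- an atom of `G⁺`. -/
def Atom (Γ : GarsideStructure G) (a : G) : Prop :=
  a ∈ Γ.pos ∧ a ≠ 1 ∧ ∀ b ∈ Γ.pos, ∀ c ∈ Γ.pos, a = b * c → b = 1 ∨ c = 1

/-- the iterated automorphism `τ^k`, where `τ(x) = Δ⁻¹xΔ`; so `τ^k(x) = Δ^(-k) x Δ^k`. -/
def tau (Γ : GarsideStructure G) (k : ℤ) (x : G) : G := Γ.Δ ^ (-k) * x * Γ.Δ ^ k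

/-- `d` is the greatest common left divisor (`∧`) of `a` and `b`. -/
def IsLeftGcd (Γ : GarsideStructure G) (d a b : G) : Prop :=
  d ∈ Γ.pos ∧ Γ.LeftDvd d a ∧ Γ.LeftDvd d b ∧
    ∀ c ∈ Γ.pos, Γ.LeftDvd c a → Γ.LeftDvd c b → Γ.LeftDvd c d

/-- `d` is the greatest common right divisor (`⋀̃`) of `a` and `b`. -/
def IsRightGcd (Γ : GarsideStructure G) (d a b : G) : Prop :=
  d ∈ Γ.pos ∧ Γ.RightDvd a d ∧ Γ.RightDvd b d ∧
    ∀ c ∈ Γ.pos, Γ.RightDvd a c → Γ.RightDvd b c → Γ.RightDvd d c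

/-- membership of a tuple `a ∈ Gʳ` in the interval `[p,q]`:
`pᵢ ≤ inf aᵢ` (i.e. `Δ^pᵢ ≼ aᵢ`) and `sup aᵢ ≤ qᵢ` (i.e. `aᵢ ≼ Δ^qᵢ`) for all `i`. -/
def InInterval (Γ : GarsideStructure G) {r : ℕ} (p q : Fin r → ℤ) (a : Fin r → G) : Prop :=
  ∀ i, Γ.LeftDvd (Γ.Δ ^ (p i)) (a i) ∧ Γ.LeftDvd (a i) (Γ.Δ ^ (q i))

/-- `‖a‖`: the maximal number of atoms in an expression of `a` as a product of atoms. -/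
noncomputable def anorm (Γ : GarsideStructure G) (a : G) : ℕ :=
  sSup {n | ∃ l : List G, (∀ x ∈ l, Γ.Atom x) ∧ l.prod = a ∧ l.length = n}

end GarsideStructure

/-- The conjugation `τ(x) = Δ⁻¹xΔ` maps positives to positives. -/
lemma tau_pos {G : Type*} [Group G] (Γ : GarsideStructure G)
    {x : G} (hx : x ∈ Γ.pos) : Γ.Δ⁻¹ * x * Γ.Δ ∈ Γ.pos := by
  rw [← Γ.simples_generate] at hx
  induction hx using Submonoid.closure_induction with
  | mem s hs =>
    obtain ⟨hs1, hs2⟩ := hs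
    have hv : (s⁻¹ * Γ.Δ)⁻¹ * Γ.Δ ∈ Γ.pos := by
      rw [Γ.balanced _ hs2]
      have : Γ.Δ * (s⁻¹ * Γ.Δ)⁻¹ = s := by group
      rw [this]; exact hs1
    have : (s⁻¹ * Γ.Δ)⁻¹ * Γ.Δ = Γ.Δ⁻¹ * s * Γ.Δ := by group
    rwa [this] at hv
  | one =>
    have : Γ.Δ⁻¹ * 1 * Γ.Δ = 1 := by group
    rw [this]; exact Γ.pos.one_mem
  | mul a b _ _ ha hb =>
    have : Γ.Δ⁻¹ * (a * b) * Γ.Δ = (Γ.Δ⁻¹ * a * Γ.Δ) * (Γ.Δ⁻¹ * b * Γ.Δ) := by group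
    rw [this]; exact Γ.pos.mul_mem ha hb

/-- In a Garside group, for all `α, β ∈ G⁺`: if `Δ ≼ αβ` then `Δ ≼ α(β ∧ Δ)`,
where `β ∧ Δ` is the greatest common left divisor of `β` and `Δ`. -/
theorem delta_leftDvd_mul_gcd {G : Type*} [Group G] (Γ : GarsideStructure G)
    (α β : G) (hα : α ∈ Γ.pos) (hβ : β ∈ Γ.pos)
    (d : G) (hd : Γ.IsLeftGcd d β Γ.Δ)
    (h : Γ.LeftDvd Γ.Δ (α * β)) :
    Γ.LeftDvd Γ.Δ (α * d) := by
  obtain ⟨hdpos, hdβ, hdΔ, hdmax⟩ := hd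
  -- m = right lcm of α and Δ
  obtain ⟨m, hm, hαm, hΔm, hmin⟩ := Γ.lcm_right α hα Γ.Δ Γ.delta_mem
  -- αβ is a common right multiple of α and Δ, so m ≼ αβ
  have h1 : m⁻¹ * (α * β) ∈ Γ.pos := by
    apply hmin (α * β) (Γ.pos.mul_mem hα hβ)
    · have : α⁻¹ * (α * β) = β := by group
      rw [this]; exact hβ
    · exact h
  -- αΔ is a common right multiple of α and Δ, so m ≼ αΔ
  have h2 : m⁻¹ * (α * Γ.Δ) ∈ Γ.pos := by
    apply hmin (α * Γ.Δ) (Γ.pos.mul_mem hα Γ.delta_mem)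
    · have : α⁻¹ * (α * Γ.Δ) = Γ.Δ := by group
      rw [this]; exact Γ.delta_mem
    · have : Γ.Δ⁻¹ * (α * Γ.Δ) = Γ.Δ⁻¹ * α * Γ.Δ := by group
      rw [this]; exact tau_pos Γ hα
  -- e = α⁻¹m; e ≼ β and e ≼ Δ
  set e := α⁻¹ * m with he
  have heβ : Γ.LeftDvd e β := by
    have : e⁻¹ * β = m⁻¹ * (α * β) := by rw [he]; group
    unfold GarsideStructure.LeftDvd
    rw [this]; exact h1
  have heΔ : Γ.LeftDvd e Γ.Δ := by
    have : e⁻¹ * Γ.Δ = m⁻¹ * (α * Γ.Δ) := by rw [he]; group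
    unfold GarsideStructure.LeftDvd
    rw [this]; exact h2
  -- hence e ≼ d
  have hed : Γ.LeftDvd e d := hdmax e hαm heβ heΔ
  -- Δ⁻¹ α d = (Δ⁻¹ m)(e⁻¹ d)
  unfold GarsideStructure.LeftDvd at hed ⊢
  have : Γ.Δ⁻¹ * (α * d) = (Γ.Δ⁻¹ * m) * (e⁻¹ * d) := by rw [he]; group
  rw [this]
  exact Γ.pos.mul_mem hΔm hed
end

section
/- Let G be a Garside group, r a natural number, p, q ∈ ℤ^r, and let a, c ∈ [p,q] be conjugate in G. Then there exist l ∈ ℕ, tuples v₀, v₁, …, v_l ∈ [p,q], and simple elements s₁, …, s_l ∈ S such that v₀ = a, v_l = c, and v_{i−1}^{s_i} = v_i for each i = 1, …, l. -/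
/-!
Some power `Δⁿ` is central, since `τ` permutes the finitely many simple elements; multiplying
a conjugator by a large power of it, we may assume that `a` and `c` are conjugate by a positive
element `x`. Let `d = x ∧ Δ`, a simple element. If `a` and `aˣ` have `inf ≥ k` then so has `aᵈ`:
with `A = Δ⁻ᵏa` the condition `inf aˣ ≥ k` reads `τᵏ(x) ≼ Ax`, and `τᵏ(d)` left-divides both
`τᵏ(x) ≼ Ax` and `Δ ≼ AΔ`, hence their gcd `Ad`. Bounds on `sup` are bounds on `inf` of inverses.
So `aᵈ` lies in `[p,q]`, and it is conjugate to `c` by `d⁻¹x`, which has fewer factors than `x`.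
-/

theorem Relation.ReflTransGen.exists_fin_chain {α : Type*} {R : α → α → Prop} {a b : α}
    (h : Relation.ReflTransGen R a b) :
    ∃ (l : ℕ) (v : Fin (l + 1) → α),
      v 0 = a ∧ v (Fin.last l) = b ∧ ∀ i : Fin l, R (v i.castSucc) (v i.succ) := by
  induction h using Relation.ReflTransGen.head_induction_on with
  | refl => exact ⟨0, fun _ => b, rfl, rfl, Fin.elim0⟩
  | head hac _ ih =>
    obtain ⟨l, v, h0, hl, hv⟩ := ih
    refine ⟨l + 1, Fin.cons _ v, rfl, by simpa [← Fin.succ_last] using hl,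
      Fin.cases ?_ fun i => ?_⟩
    · simpa [h0] using hac
    · simpa using hv i

namespace GarsideStructure

variable {G : Type*} [Group G] (Γ : GarsideStructure G)

local infix:50 " ≼ " => Γ.LeftDvd

section Divisibility

variable {Γ} {a b c g : G}

theorem LeftDvd.trans (hab : a ≼ b) (hbc : b ≼ c) : a ≼ c := by
  simpa [LeftDvd, mul_assoc] using mul_mem hab hbc

instance : IsTrans G Γ.LeftDvd := ⟨fun _ _ _ => LeftDvd.trans⟩

theorem leftDvd_mul_left_iff : g * a ≼ g * b ↔ a ≼ b := by
  simp [LeftDvd, mul_assoc]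

theorem one_leftDvd_iff : 1 ≼ a ↔ a ∈ Γ.pos := by
  simp [LeftDvd]

theorem leftDvd_mul_right (a : G) (hb : b ∈ Γ.pos) : a ≼ a * b := by
  simpa [LeftDvd] using hb

theorem LeftDvd.mem_pos (ha : a ∈ Γ.pos) (hab : a ≼ b) : b ∈ Γ.pos := by
  simpa using mul_mem ha hab

theorem Simple.mem_pos {s : G} (hs : Γ.Simple s) : s ∈ Γ.pos := hs.1

end Divisibility

section Tau

variable {Γ} {a b x : G}

theorem tau_mul (k : ℤ) (a b : G) : Γ.tau k (a * b) = Γ.tau k a * Γ.tau k b := by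
  simp only [tau]; group

theorem tau_inv (k : ℤ) (a : G) : Γ.tau k a⁻¹ = (Γ.tau k a)⁻¹ := by
  simp only [tau]; group

theorem tau_tau (k l : ℤ) (a : G) : Γ.tau k (Γ.tau l a) = Γ.tau (l + k) a := by
  simp only [tau]; group

theorem tau_zero (a : G) : Γ.tau 0 a = a := by
  simp [tau]

theorem tau_delta (k : ℤ) : Γ.tau k Γ.Δ = Γ.Δ := by
  simp only [tau]; group

theorem map_mem_pos_of_simple {F : Type*} [FunLike F G G] [MonoidHomClass F G G] (f : F)
    (hf : ∀ s, Γ.Simple s → f s ∈ Γ.pos) (hx : x ∈ Γ.pos) : f x ∈ Γ.pos := by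
  rw [← Γ.simples_generate] at hx
  exact (Submonoid.closure_le (S := Γ.pos.comap f)).2 (fun s hs => hf s hs) hx

-- `τ(s) = (s⁻¹Δ)⁻¹Δ` is positive as `s⁻¹Δ`, a right divisor of `Δ`, is a left divisor too.
theorem tau_one_mem_pos (hx : x ∈ Γ.pos) : Γ.tau 1 x ∈ Γ.pos := by
  have h := map_mem_pos_of_simple (MulAut.conj Γ.Δ⁻¹) (fun s hs => ?_) hx
  · simpa [tau] using h
  have ht : Γ.Δ * (s⁻¹ * Γ.Δ)⁻¹ ∈ Γ.pos := by simpa using hs.mem_pos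
  simpa [mul_assoc] using (Γ.balanced _ hs.2).2 ht

theorem tau_neg_one_mem_pos (hx : x ∈ Γ.pos) : Γ.tau (-1) x ∈ Γ.pos := by
  have h := map_mem_pos_of_simple (MulAut.conj Γ.Δ) (fun s hs => ?_) hx
  · simpa [tau] using h
  have ht : (Γ.Δ * s⁻¹)⁻¹ * Γ.Δ ∈ Γ.pos := by simpa using hs.mem_pos
  simpa [mul_assoc] using (Γ.balanced _ ((Γ.balanced s hs.mem_pos).1 hs.2)).1 ht

theorem tau_mem_pos (k : ℤ) (hx : x ∈ Γ.pos) : Γ.tau k x ∈ Γ.pos := by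
  induction k using Int.induction_on with
  | zero => simpa [tau_zero] using hx
  | succ k ih => simpa [tau_tau] using tau_one_mem_pos ih
  | pred k ih => simpa [tau_tau, sub_eq_add_neg] using tau_neg_one_mem_pos ih

theorem tau_mem_pos_iff (k : ℤ) : Γ.tau k x ∈ Γ.pos ↔ x ∈ Γ.pos :=
  ⟨fun h => by simpa [tau_tau, tau_zero] using tau_mem_pos (-k) h, tau_mem_pos k⟩

theorem tau_leftDvd_tau_iff (k : ℤ) : Γ.tau k a ≼ Γ.tau k b ↔ a ≼ b := by
  rw [LeftDvd, LeftDvd, ← tau_inv, ← tau_mul, tau_mem_pos_iff]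

theorem Simple.tau {s : G} (hs : Γ.Simple s) (k : ℤ) : Γ.Simple (Γ.tau k s) :=
  ⟨tau_mem_pos k hs.mem_pos, by simpa [tau_delta] using (tau_leftDvd_tau_iff k).2 hs.2⟩

end Tau

section Gcd

variable {Γ} {a d x y A : G}

theorem IsLeftGcd.mul_left (h : Γ.IsLeftGcd d x y) (hA : A ∈ Γ.pos) :
    Γ.IsLeftGcd (A * d) (A * x) (A * y) := by
  obtain ⟨hd, hdx, hdy, hmax⟩ := h
  refine ⟨mul_mem hA hd, leftDvd_mul_left_iff.2 hdx, leftDvd_mul_left_iff.2 hdy,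
    fun c hc hcx hcy => ?_⟩
  have hx := hdx.mem_pos hd
  have hy := hdy.mem_pos hd
  -- the lcm `m` of `A` and `c` divides `Ax` and `Ay`, so `A⁻¹m` divides `x` and `y`
  obtain ⟨m, -, hAm, hcm, hmin⟩ := Γ.lcm_right A hA c hc
  have hmx : m ≼ A * x := hmin _ (mul_mem hA hx) (leftDvd_mul_right A hx) hcx
  have hmy : m ≼ A * y := hmin _ (mul_mem hA hy) (leftDvd_mul_right A hy) hcy
  rw [← mul_inv_cancel_left A m] at hmx hmy
  have hmd : A⁻¹ * m ≼ d := hmax _ hAm (leftDvd_mul_left_iff.1 hmx) (leftDvd_mul_left_iff.1 hmy)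
  refine LeftDvd.trans hcm ?_
  simpa using (leftDvd_mul_left_iff (g := A)).2 hmd

theorem delta_leftDvd_mul_delta (hA : A ∈ Γ.pos) : Γ.Δ ≼ A * Γ.Δ := by
  simpa [LeftDvd, tau, mul_assoc] using tau_mem_pos 1 hA

theorem zpow_leftDvd_conj_iff (k : ℤ) (a g : G) :
    Γ.Δ ^ k ≼ g⁻¹ * a * g ↔ Γ.tau k g ≼ Γ.Δ ^ (-k) * a * g := by
  have h : (Γ.Δ ^ k)⁻¹ * (g⁻¹ * a * g) = (Γ.tau k g)⁻¹ * (Γ.Δ ^ (-k) * a * g) := by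
    simp only [tau]; group
  rw [LeftDvd, LeftDvd, h]

theorem leftDvd_zpow_iff_zpow_neg_leftDvd_inv (k : ℤ) (a : G) :
    a ≼ Γ.Δ ^ k ↔ Γ.Δ ^ (-k) ≼ a⁻¹ := by
  have h : Γ.tau (-k) (a⁻¹ * Γ.Δ ^ k) = (Γ.Δ ^ (-k))⁻¹ * a⁻¹ := by
    simp only [tau]; group
  rw [LeftDvd, LeftDvd, ← tau_mem_pos_iff (-k), h]

theorem zpow_leftDvd_conj_of_isLeftGcd {k : ℤ} (hd : Γ.IsLeftGcd d x Γ.Δ)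
    (ha : Γ.Δ ^ k ≼ a) (hax : Γ.Δ ^ k ≼ x⁻¹ * a * x) : Γ.Δ ^ k ≼ d⁻¹ * a * d := by
  have hA : Γ.Δ ^ (-k) * a ∈ Γ.pos := by simpa [LeftDvd, zpow_neg] using ha
  rw [zpow_leftDvd_conj_iff] at hax ⊢
  refine (hd.mul_left hA).2.2.2 _ (tau_mem_pos k hd.1) ?_ ?_
  · exact ((tau_leftDvd_tau_iff k).2 hd.2.1).trans hax
  · have hdΔ : Γ.tau k d ≼ Γ.Δ := by
      simpa [tau_delta] using (tau_leftDvd_tau_iff k).2 hd.2.2.1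
    exact hdΔ.trans (delta_leftDvd_mul_delta hA)

theorem leftDvd_zpow_conj_of_isLeftGcd {k : ℤ} (hd : Γ.IsLeftGcd d x Γ.Δ)
    (ha : a ≼ Γ.Δ ^ k) (hax : x⁻¹ * a * x ≼ Γ.Δ ^ k) : d⁻¹ * a * d ≼ Γ.Δ ^ k := by
  have conj_inv : ∀ g : G, (g⁻¹ * a * g)⁻¹ = g⁻¹ * a⁻¹ * g := fun g => by group
  rw [leftDvd_zpow_iff_zpow_neg_leftDvd_inv] at ha hax ⊢
  rw [conj_inv] at hax ⊢
  exact zpow_leftDvd_conj_of_isLeftGcd hd ha hax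

theorem InInterval.conj_of_isLeftGcd {r : ℕ} {p q : Fin r → ℤ} {a : Fin r → G}
    (hd : Γ.IsLeftGcd d x Γ.Δ) (ha : Γ.InInterval p q a)
    (hax : Γ.InInterval p q fun j => x⁻¹ * a j * x) :
    Γ.InInterval p q fun j => d⁻¹ * a j * d := fun j =>
  ⟨zpow_leftDvd_conj_of_isLeftGcd hd (ha j).1 (hax j).1,
    leftDvd_zpow_conj_of_isLeftGcd hd (ha j).2 (hax j).2⟩

end Gcd

section Centre

variable {Γ} {u : G}

theorem delta_pow_leftDvd_delta_pow {m n : ℕ} (h : m ≤ n) : Γ.Δ ^ m ≼ Γ.Δ ^ n := by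
  rw [← Nat.add_sub_cancel' h, pow_add]
  exact leftDvd_mul_right _ (pow_mem Γ.delta_mem _)

theorem exists_leftDvd_delta_pow (hu : u ∈ Γ.pos) : ∃ K : ℕ, u ≼ Γ.Δ ^ K := by
  rw [← Γ.simples_generate] at hu
  induction hu using Submonoid.closure_induction_left with
  | one => exact ⟨0, by simp [LeftDvd, one_mem]⟩
  | mul_left s hs y _ ih =>
    obtain ⟨K, hK⟩ := ih
    have hs' : Γ.Simple s := hs
    refine ⟨K + 1, ?_⟩
    calc s * y ≼ s * Γ.Δ ^ K := leftDvd_mul_left_iff.2 hK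
      _ = Γ.Δ ^ K * Γ.tau K s := by simp only [tau, zpow_neg, zpow_natCast]; group
      _ ≼ Γ.Δ ^ K * Γ.Δ := leftDvd_mul_left_iff.2 (hs'.tau K).2
      _ = Γ.Δ ^ (K + 1) := (pow_succ _ _).symm

theorem commute_delta_zpow_iff_tau_eq (k : ℤ) (a : G) :
    Commute (Γ.Δ ^ k) a ↔ Γ.tau k a = a := by
  rw [tau, zpow_neg, mul_assoc, inv_mul_eq_iff_eq_mul, eq_comm]
  rfl

theorem commute_of_forall_simple {D : G} (hD : ∀ s, Γ.Simple s → Commute D s) (g : G) :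
    Commute D g := by
  have hpos : ∀ x ∈ Γ.pos, Commute D x := by
    intro x hx
    rw [← Γ.simples_generate] at hx
    induction hx using Submonoid.closure_induction with
    | mem s hs => exact hD s hs
    | one => exact Commute.one_right D
    | mul x y _ _ hx hy => exact hx.mul_right hy
  obtain ⟨u, hu, v, hv, rfl⟩ := Γ.fractions g
  exact (hpos u hu).inv_right.mul_right (hpos v hv)

theorem exists_delta_pow_commute : ∃ n : ℕ, 0 < n ∧ ∀ g : G, Commute (Γ.Δ ^ n) g := by
  have : Finite {s // Γ.Simple s} := Γ.simples_finite.to_subtype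
  -- pigeonhole on the maps `τᵐ` of the finite set of simple elements
  obtain ⟨i, j, hij, heq⟩ := Finite.exists_ne_map_eq_of_infinite
    fun m : ℕ => fun s : {s // Γ.Simple s} => (⟨Γ.tau m s, s.2.tau m⟩ : {s // Γ.Simple s})
  wlog hlt : i < j generalizing i j
  · exact this j i hij.symm heq.symm (by omega)
  refine ⟨j - i, by omega, Γ.commute_of_forall_simple fun s hs => ?_⟩
  have h := congrArg (fun f => Γ.tau (-i) (f ⟨s, hs⟩).1) heq
  simp only [tau_tau, add_neg_cancel, tau_zero] at h
  rw [← zpow_natCast, commute_delta_zpow_iff_tau_eq, Nat.cast_sub hlt.le, sub_eq_add_neg]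
  exact h.symm

theorem exists_mem_pos_conj_eq (x : G) : ∃ y ∈ Γ.pos, ∀ g : G, y⁻¹ * g * y = x⁻¹ * g * x := by
  obtain ⟨u, hu, v, hv, rfl⟩ := Γ.fractions x
  obtain ⟨n, hn, hcentral⟩ := Γ.exists_delta_pow_commute
  obtain ⟨K, hK⟩ := exists_leftDvd_delta_pow hu
  set N := Γ.Δ ^ (n * K)
  have hN : ∀ g, Commute N g := fun g => by simpa only [N, pow_mul] using (hcentral g).pow_left K
  have huN : u ≼ N := hK.trans (delta_pow_leftDvd_delta_pow (Nat.le_mul_of_pos_left K hn))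
  refine ⟨u⁻¹ * v * N, ?_, fun g => ?_⟩
  · rw [mul_assoc, ← (hN v).eq, ← mul_assoc]
    exact mul_mem huN hv
  · calc (u⁻¹ * v * N)⁻¹ * g * (u⁻¹ * v * N)
        = N⁻¹ * ((u⁻¹ * v)⁻¹ * g * (u⁻¹ * v) * N) := by group
      _ = (u⁻¹ * v)⁻¹ * g * (u⁻¹ * v) := by rw [← (hN _).eq]; group

end Centre

section Length

def factorLengths (a : G) : Set ℕ :=
  {n | ∃ l : List G, (∀ x ∈ l, x ∈ Γ.pos ∧ x ≠ 1) ∧ l.prod = a ∧ l.length = n}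

-- Meaningful only for `a ∈ G⁺`, where Noetherianity bounds `factorLengths a` (else `sSup = 0`).
noncomputable def factorLength (a : G) : ℕ := sSup (Γ.factorLengths a)

variable {Γ} {a b x : G}

theorem factorLengths_bddAbove (ha : a ∈ Γ.pos) : BddAbove (Γ.factorLengths a) := by
  obtain ⟨n, hn⟩ := Γ.noetherian a ha
  exact ⟨n, by rintro _ ⟨l, hl, hprod, rfl⟩; exact hn l hl hprod⟩

theorem factorLength_mem (ha : a ∈ Γ.pos) : Γ.factorLength a ∈ Γ.factorLengths a := by
  refine Nat.sSup_mem ?_ (factorLengths_bddAbove ha)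
  by_cases h : a = 1
  · exact ⟨0, [], by simp, by simp [h], rfl⟩
  · exact ⟨1, [a], by simp [ha, h], by simp, rfl⟩

theorem le_factorLength (ha : a ∈ Γ.pos) {n : ℕ} (hn : n ∈ Γ.factorLengths a) :
    n ≤ Γ.factorLength a :=
  le_csSup (factorLengths_bddAbove ha) hn

theorem one_le_factorLength (ha : a ∈ Γ.pos) (h : a ≠ 1) : 1 ≤ Γ.factorLength a :=
  le_factorLength ha ⟨[a], by simp [ha, h], by simp, rfl⟩

theorem factorLength_add_factorLength_le (ha : a ∈ Γ.pos) (hab : a ≼ b) :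
    Γ.factorLength a + Γ.factorLength (a⁻¹ * b) ≤ Γ.factorLength b := by
  obtain ⟨la, hla, hpa, hna⟩ := factorLength_mem ha
  obtain ⟨lb, hlb, hpb, hnb⟩ := factorLength_mem hab
  refine le_factorLength (hab.mem_pos ha)
    ⟨la ++ lb, fun x hx => ?_, by simp [hpa, hpb], by simp [hna, hnb]⟩
  exact (List.mem_append.1 hx).elim (hla x) (hlb x)

theorem factorLength_le_of_leftDvd (ha : a ∈ Γ.pos) (hab : a ≼ b) :
    Γ.factorLength a ≤ Γ.factorLength b :=
  (Nat.le_add_right _ _).trans (factorLength_add_factorLength_le ha hab)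

theorem exists_isLeftGcd (ha : a ∈ Γ.pos) (hb : b ∈ Γ.pos) : ∃ d, Γ.IsLeftGcd d a b := by
  set D := {c | c ∈ Γ.pos ∧ c ≼ a ∧ c ≼ b}
  have hbdd : BddAbove (Γ.factorLength '' D) :=
    ⟨Γ.factorLength a, by rintro _ ⟨c, hc, rfl⟩; exact factorLength_le_of_leftDvd hc.1 hc.2.1⟩
  have hne : (Γ.factorLength '' D).Nonempty :=
    ⟨_, 1, ⟨one_mem _, one_leftDvd_iff.2 ha, one_leftDvd_iff.2 hb⟩, rfl⟩
  -- a longest common divisor `d` is the gcd: for a common divisor `c`, the lcm of `d` and `c`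
  -- is again a common divisor, no longer than `d`, so it equals `d`
  obtain ⟨d, ⟨hd, hda, hdb⟩, hdmax⟩ := Nat.sSup_mem hne hbdd
  refine ⟨d, hd, hda, hdb, fun c hc hca hcb => ?_⟩
  obtain ⟨m, hm, hdm, hcm, hmin⟩ := Γ.lcm_right d hd c hc
  have hmD : m ∈ D := ⟨hm, hmin a ha hda hca, hmin b hb hdb hcb⟩
  have hlen := factorLength_add_factorLength_le hd hdm
  have hmd : Γ.factorLength m ≤ Γ.factorLength d := hdmax ▸ le_csSup hbdd ⟨m, hmD, rfl⟩
  have hdm1 : d⁻¹ * m = 1 := by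
    by_contra h
    have := one_le_factorLength hdm h
    omega
  rw [inv_mul_eq_one] at hdm1
  rwa [hdm1]

theorem exists_simple_leftDvd (hx : x ∈ Γ.pos) (h : x ≠ 1) :
    ∃ s, Γ.Simple s ∧ s ≠ 1 ∧ s ≼ x := by
  rw [← Γ.simples_generate] at hx
  induction hx using Submonoid.closure_induction_left with
  | one => exact absurd rfl h
  | mul_left s hs y hy ih =>
    by_cases hs1 : s = 1
    · subst hs1
      simpa using ih (by simpa using h)
    · exact ⟨s, hs, hs1, leftDvd_mul_right s (Γ.simples_generate ▸ hy)⟩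

end Length

section Chain

variable {r : ℕ} (p q : Fin r → ℤ)

def SimpleConjStep (a b : Fin r → G) : Prop :=
  Γ.InInterval p q b ∧ ∃ s, Γ.Simple s ∧ ∀ j, b j = s⁻¹ * a j * s

variable {Γ p q}

theorem reflTransGen_simpleConjStep_of_mem_pos {x : G} (hx : x ∈ Γ.pos) {a c : Fin r → G}
    (ha : Γ.InInterval p q a) (hc : Γ.InInterval p q c) (hac : ∀ j, c j = x⁻¹ * a j * x) :
    Relation.ReflTransGen (Γ.SimpleConjStep p q) a c := by
  induction hn : Γ.factorLength x using Nat.strong_induction_on generalizing x a with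
  | _ n ih =>
  by_cases hx1 : x = 1
  · obtain rfl : c = a := funext fun j => by simp [hac, hx1]
    exact Relation.ReflTransGen.refl
  obtain ⟨s, hs, hs1, hsx⟩ := exists_simple_leftDvd hx hx1
  obtain ⟨d, hd⟩ := exists_isLeftGcd hx Γ.delta_mem
  have hb : Γ.InInterval p q fun j => d⁻¹ * a j * d :=
    InInterval.conj_of_isLeftGcd hd ha (funext hac ▸ hc)
  -- `d` is non-trivial since the non-trivial simple `s` divides it
  have hlen : Γ.factorLength (d⁻¹ * x) < n := by
    have := factorLength_le_of_leftDvd hs.mem_pos (hd.2.2.2 s hs.mem_pos hsx hs.2)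
    have := one_le_factorLength hs.mem_pos hs1
    have := factorLength_add_factorLength_le hd.1 hd.2.1
    omega
  refine .head ⟨hb, d, ⟨hd.1, hd.2.2.1⟩, fun j => rfl⟩ ?_
  exact ih _ hlen (x := d⁻¹ * x) hd.2.1 hb (fun j => by rw [hac]; group) rfl

end Chain

end GarsideStructure

/-- If `a, c ∈ [p,q]` are conjugate, then there is a chain `v₀ = a, v₁, …, v_l = c`
inside `[p,q]` in which each `vᵢ` is obtained from `vᵢ₋₁` by conjugating by a simple
element. -/
theorem conjugate_chain_in_interval {G : Type*} [Group G] (Γ : GarsideStructure G)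
    (r : ℕ) (p q : Fin r → ℤ) (a c : Fin r → G)
    (ha : Γ.InInterval p q a) (hc : Γ.InInterval p q c)
    (hconj : ∃ x : G, ∀ i, x⁻¹ * a i * x = c i) :
    ∃ (l : ℕ) (v : Fin (l + 1) → Fin r → G) (s : Fin l → G),
      v 0 = a ∧ v (Fin.last l) = c ∧
      (∀ i, Γ.InInterval p q (v i)) ∧
      (∀ i : Fin l, Γ.Simple (s i) ∧
        ∀ j, v i.succ j = (s i)⁻¹ * v i.castSucc j * (s i)) := by
  obtain ⟨x, hx⟩ := hconj
  obtain ⟨y, hy, hyx⟩ := Γ.exists_mem_pos_conj_eq x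
  have hchain := GarsideStructure.reflTransGen_simpleConjStep_of_mem_pos hy ha hc
    fun j => by rw [hyx, hx]
  obtain ⟨l, v, h0, hl, hstep⟩ := hchain.exists_fin_chain
  choose hv s hs hsv using hstep
  exact ⟨l, v, s, h0, hl, Fin.cases (h0 ▸ ha) hv, fun i => ⟨hs i, hsv i⟩⟩
end
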